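/- arXiv:2002.02485 — 4 statements merged into one kernel-verified Lean document; each statement's English description precedes it below -/
import Mathlib

section
/- Let G be a topological group generated by a compact symmetric subset Q with 1 ∈ Q, and let |·|_Q be the associated word length. Let π be a unitary representation of G on a complex Hilbert space H, and let b : G → H be a 1-cocycle over π that is an almost coboundary. Then b has sublinear growth with respect to |·|_Q. -/
/-!
Subtracting from `b` a coboundary `g ↦ π g v - v` gives another cocycle, and the norm of a
cocycle over an isometric representation is subadditive, so on words of length `n` in `Q` it
is at most `n` times its supremum on `Q`. Choosing `v` with `b` and `g ↦ π g v - v` `ε`-close on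
the compact set `Q`, we get `‖b g‖ ≤ 2 ‖v‖ + ε |g|_Q`, which is sublinear growth since `ε` is
arbitrary.
-/

open MeasureTheory Filter Topology
open scoped Pointwise

/-- The word length of `g` with respect to a generating set `Q` (symmetric, containing `1`):
the least `n` such that `g` is a product of `n` elements of `Q`. -/
noncomputable def wordLength {G : Type*} [Group G] (Q : Set G) (g : G) : ℕ :=
  sInf {n : ℕ | g ∈ Q ^ n}

/-- A map `b : G → H` into a normed space has sublinear growth with respect to the word
length `|·|_Q` if for every `ε > 0` there is `N` with `‖b g‖ < ε * |g|_Q` whenever `|g|_Q > N`. -/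
def HasSublinearGrowth {G : Type*} [Group G] {H : Type*} [NormedAddCommGroup H]
    (Q : Set G) (b : G → H) : Prop :=
  ∀ ε : ℝ, 0 < ε → ∃ N : ℕ, ∀ g : G, N < wordLength Q g →
    ‖b g‖ < ε * (wordLength Q g : ℝ)

/-- `b` is an almost coboundary over `π`: it lies in the closure of the set of coboundaries
`g ↦ π g v - v` in the topology of uniform convergence on compact sets. -/
def IsAlmostCoboundary {G : Type*} [Group G] [TopologicalSpace G]
    {H : Type*} [NormedAddCommGroup H] [InnerProductSpace ℂ H]
    (π : G →* (H ≃ₗᵢ[ℂ] H)) (b : G → H) : Prop :=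
  ∀ K : Set G, IsCompact K → ∀ ε : ℝ, 0 < ε → ∃ v : H,
    ∀ g ∈ K, ‖b g - (π g v - v)‖ < ε

lemma exists_mem_pow_of_mem_closure {G : Type*} [Group G] {Q : Set G} (hQ : Q⁻¹ = Q) {g : G}
    (hg : g ∈ Subgroup.closure Q) : ∃ n : ℕ, g ∈ Q ^ n := by
  induction hg using Subgroup.closure_induction with
  | mem x hx => exact ⟨1, by simpa using hx⟩
  | one => exact ⟨0, by simp⟩
  | mul x y _ _ hx hy =>
    obtain ⟨m, hm⟩ := hx
    obtain ⟨k, hk⟩ := hy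
    exact ⟨m + k, pow_add Q m k ▸ Set.mul_mem_mul hm hk⟩
  | inv x _ hx =>
    obtain ⟨m, hm⟩ := hx
    exact ⟨m, by rw [← hQ, inv_pow]; exact Set.inv_mem_inv.mpr hm⟩

lemma mem_pow_wordLength {G : Type*} [Group G] {Q : Set G} {g : G} (h : ∃ n : ℕ, g ∈ Q ^ n) :
    g ∈ Q ^ wordLength Q g :=
  Nat.sInf_mem h

lemma hasSublinearGrowth_of_forall_le_add_mul {G : Type*} [Group G] {H : Type*}
    [NormedAddCommGroup H] {Q : Set G} {b : G → H}
    (h : ∀ ε : ℝ, 0 < ε → ∃ C : ℝ, ∀ g : G, ‖b g‖ ≤ C + ε * wordLength Q g) :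
    HasSublinearGrowth Q b := by
  intro ε hε
  obtain ⟨C, hC⟩ := h (ε / 2) (half_pos hε)
  refine ⟨⌈2 * C / ε⌉₊, fun g hg => ?_⟩
  have hC_lt : C < ε / 2 * wordLength Q g := by
    have : 2 * C / ε < wordLength Q g := Nat.lt_of_ceil_lt hg
    rw [div_lt_iff₀ hε] at this
    linarith
  linarith [hC g]

section Cocycle

variable {G : Type*} [Monoid G] {R E : Type*} [Semiring R] [SeminormedAddCommGroup E]
  [Module R E] (π : G →* (E ≃ₗᵢ[R] E))

def IsOneCocycle (b : G → E) : Prop :=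
  ∀ g h : G, b (g * h) = b g + π g (b h)

variable {π}

lemma IsOneCocycle.map_one {b : G → E} (hb : IsOneCocycle π b) : b 1 = 0 := by
  simpa using hb 1 1

lemma IsOneCocycle.sub_coboundary {b : G → E} (hb : IsOneCocycle π b) (v : E) :
    IsOneCocycle π fun g => b g - (π g v - v) := by
  intro g h
  dsimp only
  rw [hb g h, map_mul, LinearIsometryEquiv.coe_mul, Function.comp_apply, map_sub, map_sub]
  abel

lemma IsOneCocycle.norm_mul_le {b : G → E} (hb : IsOneCocycle π b) (g h : G) :
    ‖b (g * h)‖ ≤ ‖b g‖ + ‖b h‖ := by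
  rw [hb g h, ← (π g).norm_map (b h)]
  exact norm_add_le _ _

lemma IsOneCocycle.norm_le_of_mem_pow {b : G → E} (hb : IsOneCocycle π b) {Q : Set G} {C : ℝ}
    (hQ : ∀ q ∈ Q, ‖b q‖ ≤ C) (n : ℕ) {g : G} (hg : g ∈ Q ^ n) : ‖b g‖ ≤ n * C := by
  induction n generalizing g with
  | zero =>
    obtain rfl : g = 1 := by simpa using hg
    simp [hb.map_one]
  | succ n ih =>
    rw [pow_succ] at hg
    obtain ⟨h, hh, q, hq, rfl⟩ := hg
    calc ‖b (h * q)‖ ≤ ‖b h‖ + ‖b q‖ := hb.norm_mul_le h q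
      _ ≤ n * C + C := add_le_add (ih hh) (hQ q hq)
      _ = (n + 1 : ℕ) * C := by push_cast; ring

lemma norm_coboundary_le (g : G) (v : E) : ‖π g v - v‖ ≤ 2 * ‖v‖ := by
  calc ‖π g v - v‖ ≤ ‖π g v‖ + ‖v‖ := norm_sub_le _ _
    _ = 2 * ‖v‖ := by rw [(π g).norm_map]; ring

end Cocycle

theorem almostCoboundary_hasSublinearGrowth_general
    {G : Type*} [Group G] [TopologicalSpace G]
    (Q : Set G) (hQcomp : IsCompact Q) (hQsymm : Q⁻¹ = Q)
    (hQgen : Subgroup.closure Q = ⊤)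
    {H : Type*} [NormedAddCommGroup H] [InnerProductSpace ℂ H]
    (π : G →* (H ≃ₗᵢ[ℂ] H))
    (b : G → H)
    (hbcoc : ∀ g h : G, b (g * h) = b g + π g (b h))
    (halmost : IsAlmostCoboundary π b) :
    HasSublinearGrowth Q b := by
  refine hasSublinearGrowth_of_forall_le_add_mul fun ε hε => ?_
  obtain ⟨v, hv⟩ := halmost Q hQcomp ε hε
  refine ⟨2 * ‖v‖, fun g => ?_⟩
  have hg : g ∈ Q ^ wordLength Q g :=
    mem_pow_wordLength (exists_mem_pow_of_mem_closure hQsymm (hQgen ▸ Subgroup.mem_top g))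
  have hdefect : ‖b g - (π g v - v)‖ ≤ wordLength Q g * ε :=
    (IsOneCocycle.sub_coboundary hbcoc v).norm_le_of_mem_pow (fun q hq => (hv q hq).le) _ hg
  calc ‖b g‖ = ‖(π g v - v) + (b g - (π g v - v))‖ := by rw [add_sub_cancel]
    _ ≤ ‖π g v - v‖ + ‖b g - (π g v - v)‖ := norm_add_le _ _
    _ ≤ 2 * ‖v‖ + ε * wordLength Q g := by
      rw [mul_comm ε]; exact add_le_add (norm_coboundary_le g v) hdefect

/-- An almost coboundary 1-cocycle over a unitary representation of a compactly generated
topological group has sublinear growth. -/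
theorem almostCoboundary_hasSublinearGrowth
    {G : Type*} [Group G] [TopologicalSpace G] [IsTopologicalGroup G]
    (Q : Set G) (hQcomp : IsCompact Q) (hQsymm : Q⁻¹ = Q) (hQone : (1 : G) ∈ Q)
    (hQgen : Subgroup.closure Q = ⊤)
    {H : Type*} [NormedAddCommGroup H] [InnerProductSpace ℂ H] [CompleteSpace H]
    (π : G →* (H ≃ₗᵢ[ℂ] H)) (hπ : ∀ v : H, Continuous fun g : G => π g v)
    (b : G → H) (hbcont : Continuous b)
    (hbcoc : ∀ g h : G, b (g * h) = b g + π g (b h))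
    (halmost : IsAlmostCoboundary π b) :
    HasSublinearGrowth Q b :=
  almostCoboundary_hasSublinearGrowth_general Q hQcomp hQsymm hQgen π b hbcoc halmost
end

section
/- Let G be a locally compact second-countable Hausdorff topological group acting measurably on a standard Borel probability space (S, μ) by measure-preserving transformations. Let α : G × S → ℝ be a jointly measurable strict cocycle such that α(g, ·) ∈ L²(S, μ) for every g ∈ G. Let π be the Koopman representation of G on L²(S, μ; ℝ), given by (π(g)f)(x) = f(g⁻¹·x) (each π(g) is a linear isometric isomorphism since the action preserves μ). Then the map b : G → L²(S, μ; ℝ) defined by b(g) = (the class of) x ↦ α(g⁻¹, x) satisfies b(gh) = b(g) + π(g)(b(h)) for all g, h ∈ G, and b is continuous; that is, b is a 1-cocycle over π. -/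
/-!
The cocycle identity for `b` is the pointwise identity
`α (h⁻¹ * g⁻¹) = α h⁻¹ ∘ (g⁻¹ • ·) + α g⁻¹`. For continuity, put `B g = [α g]`: the cocycle
identity and the invariance of `μ` give `dist (B a) (B b) = ‖B (a * b⁻¹)‖`, so the pseudometric
pulled back by `B` is right-invariant. Joint measurability of `α` makes every `g ↦ dist (B g) c`
Borel, and as `L²` is separable, `B` pulls back some small ball to a set of positive Haar measure.
By Steinhaus' theorem its difference set is a neighbourhood of `1`, on which `‖B‖` is small.
-/

open MeasureTheory Filter Topology
open scoped ENNReal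

theorem Measurable.eLpNorm_of_uncurry {G S E : Type*} [MeasurableSpace G] [MeasurableSpace S]
    [NormedAddCommGroup E] [MeasurableSpace E] [OpensMeasurableSpace E]
    {μ : Measure S} [SFinite μ] {p : ℝ≥0∞} (hp : p ≠ ∞) {f : G → S → E}
    (hf : Measurable (Function.uncurry f)) : Measurable fun g ↦ eLpNorm (f g) p μ := by
  rcases eq_or_ne p 0 with rfl | hp0
  · simp
  simp_rw [eLpNorm_eq_lintegral_rpow_enorm_toReal hp0 hp]
  exact (hf.enorm.pow_const _).lintegral_prod_right.pow_const _

theorem measurable_dist_toLp {G S E : Type*} [MeasurableSpace G] [MeasurableSpace S]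
    {μ : Measure S} [SFinite μ] [NormedAddCommGroup E] [MeasurableSpace E] [BorelSpace E]
    [SecondCountableTopology E] {p : ℝ≥0∞} [Fact (1 ≤ p)] [Fact (p ≠ ∞)] {f : G → S → E}
    (hf : Measurable (Function.uncurry f)) (hLp : ∀ g, MemLp (f g) p μ) (c : Lp E p μ) :
    Measurable fun g ↦ dist ((hLp g).toLp (f g)) c := by
  obtain ⟨c', hc', hcc'⟩ := (Lp.aestronglyMeasurable c).aemeasurable
  have hdist : ∀ g, dist ((hLp g).toLp (f g)) c = (eLpNorm (f g - c') p μ).toReal := by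
    intro g
    rw [Lp.dist_def]
    congr 1
    refine eLpNorm_congr_ae ?_
    filter_upwards [(hLp g).coeFn_toLp, hcc'] with x h1 h2
    simp [h1, h2]
  simp_rw [hdist]
  exact ENNReal.measurable_toReal.comp <|
    Measurable.eLpNorm_of_uncurry Fact.out (hf.sub (hc'.comp measurable_snd))

theorem exists_measure_preimage_ball_ne_zero {G X : Type*} [MeasurableSpace G]
    [PseudoMetricSpace X] [TopologicalSpace.SeparableSpace X] {ν : Measure G} (hν : ν ≠ 0)
    (B : G → X) {r : ℝ} (hr : 0 < r) : ∃ c, ν (B ⁻¹' Metric.ball c r) ≠ 0 := by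
  obtain ⟨D, hDc, hDd⟩ := TopologicalSpace.exists_countable_dense X
  by_contra! hnull
  have hcover : Set.univ ⊆ ⋃ c ∈ D, B ⁻¹' Metric.ball c r := fun g _ ↦ by
    obtain ⟨c, hcD, hc⟩ := hDd.exists_dist_lt (B g) hr
    exact Set.mem_biUnion hcD hc
  exact hν <| Measure.measure_univ_eq_zero.1 <|
    measure_mono_null hcover ((measure_biUnion_null_iff hDc).2 fun c _ ↦ hnull c)

section

variable {G X : Type*} [Group G] [TopologicalSpace G] [IsTopologicalGroup G]
  [LocallyCompactSpace G] [SecondCountableTopology G] [MeasurableSpace G] [BorelSpace G]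
  [PseudoMetricSpace X] [TopologicalSpace.SeparableSpace X] {B : G → X}

theorem eventually_dist_one_lt_of_dist_mul_right (hB : ∀ c, Measurable fun g ↦ dist (B g) c)
    (hinv : ∀ a b g, dist (B (a * g)) (B (b * g)) = dist (B a) (B b)) {ε : ℝ} (hε : 0 < ε) :
    ∀ᶠ s in 𝓝 1, dist (B s) (B 1) < ε := by
  obtain ⟨c, hc⟩ := exists_measure_preimage_ball_ne_zero (NeZero.ne (Measure.haar : Measure G))
    B (half_pos hε)
  have hmeas : MeasurableSet (B ⁻¹' Metric.ball c (ε / 2)) :=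
    measurableSet_lt (hB c) measurable_const
  filter_upwards [Measure.div_mem_nhds_one_of_haar_pos Measure.haar _ hmeas (pos_iff_ne_zero.2 hc)]
  rintro _ ⟨a, ha, b, hb, rfl⟩
  calc dist (B (a / b)) (B 1) = dist (B a) (B b) := by
        simpa using (hinv (a / b) 1 b).symm
    _ ≤ dist (B a) c + dist (B b) c := dist_triangle_right _ _ _
    _ < ε / 2 + ε / 2 := add_lt_add ha hb
    _ = ε := add_halves ε

theorem continuous_of_dist_mul_right (hB : ∀ c, Measurable fun g ↦ dist (B g) c)
    (hinv : ∀ a b g, dist (B (a * g)) (B (b * g)) = dist (B a) (B b)) : Continuous B := by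
  refine continuous_iff_continuousAt.2 fun g₀ ↦ Metric.tendsto_nhds.2 fun ε hε ↦ ?_
  have hto : Tendsto (fun g ↦ g * g₀⁻¹) (𝓝 g₀) (𝓝 1) := by
    simpa using (continuous_mul_const g₀⁻¹).tendsto g₀
  filter_upwards [hto.eventually (eventually_dist_one_lt_of_dist_mul_right hB hinv hε)] with g hg
  rwa [← hinv g g₀ g₀⁻¹, mul_inv_cancel]

end

theorem cocycle_sub_eq {G S E : Type*} [Group G] [MulAction G S] [AddGroup E] {α : G → S → E}
    (hα : ∀ g h : G, ∀ x : S, α (g * h) x = α g (h • x) + α h x) (a b : G) (x : S) :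
    α a x - α b x = α (a * b⁻¹) (b • x) := by
  rw [sub_eq_iff_eq_add, ← hα, inv_mul_cancel_right]

section

variable {G S E : Type*} [Group G] [MulAction G S] [MeasurableSpace S] {μ : Measure S}
  [NormedAddCommGroup E] {p : ℝ≥0∞} {α : G → S → E}

theorem dist_toLp_cocycle [Fact (1 ≤ p)] (hpres : ∀ g : G, MeasurePreserving (g • ·) μ μ)
    (hα : ∀ g h : G, ∀ x : S, α (g * h) x = α g (h • x) + α h x)
    (hLp : ∀ g : G, MemLp (α g) p μ) (a b : G) :
    dist ((hLp a).toLp (α a)) ((hLp b).toLp (α b)) = ‖(hLp (a * b⁻¹)).toLp (α (a * b⁻¹))‖ := by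
  rw [dist_eq_norm, ← MemLp.toLp_sub,
    ← Lp.norm_compMeasurePreserving ((hLp (a * b⁻¹)).toLp _) (hpres b),
    Lp.toLp_compMeasurePreserving]
  exact congrArg _ (MemLp.toLp_congr _ _ (.of_forall (cocycle_sub_eq hα a b)))

theorem toLp_cocycle_inv_mul (hpres : ∀ g : G, MeasurePreserving (g • ·) μ μ)
    (hα : ∀ g h : G, ∀ x : S, α (g * h) x = α g (h • x) + α h x)
    (hLp : ∀ g : G, MemLp (α g) p μ) (g h : G) :
    (hLp (g * h)⁻¹).toLp (α (g * h)⁻¹) =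
      (hLp g⁻¹).toLp (α g⁻¹) +
        Lp.compMeasurePreserving (g⁻¹ • ·) (hpres g⁻¹) ((hLp h⁻¹).toLp (α h⁻¹)) := by
  rw [Lp.toLp_compMeasurePreserving, ← MemLp.toLp_add]
  exact MemLp.toLp_congr _ _ (.of_forall fun x ↦ by rw [mul_inv_rev, hα, add_comm]; rfl)

end

theorem koopman_cocycle_of_L2_cocycle_general
    {G : Type*} [Group G] [TopologicalSpace G] [IsTopologicalGroup G]
    [LocallyCompactSpace G] [SecondCountableTopology G]
    [MeasurableSpace G] [BorelSpace G]
    {S : Type*} [MeasurableSpace S] [StandardBorelSpace S]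
    (μ : Measure S) [IsProbabilityMeasure μ]
    [MulAction G S]
    (hpres : ∀ g : G, MeasurePreserving (fun x : S => g • x) μ μ)
    (α : G → S → ℝ)
    (hαmeas : Measurable fun p : G × S => α p.1 p.2)
    (hαcoc : ∀ g h : G, ∀ x : S, α (g * h) x = α g (h • x) + α h x)
    (hL2 : ∀ g : G, MemLp (α g) 2 μ) :
    (∀ g h : G,
        (hL2 (g * h)⁻¹).toLp (α (g * h)⁻¹) =
          (hL2 g⁻¹).toLp (α g⁻¹) +
            Lp.compMeasurePreserving (fun x : S => g⁻¹ • x) (hpres g⁻¹)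
              ((hL2 h⁻¹).toLp (α h⁻¹))) ∧
      Continuous fun g : G => (hL2 g⁻¹).toLp (α g⁻¹) := by
  have : Fact ((2 : ℝ≥0∞) ≠ ∞) := ⟨ENNReal.ofNat_ne_top⟩
  have hB : Continuous fun g ↦ (hL2 g).toLp (α g) := by
    refine continuous_of_dist_mul_right (measurable_dist_toLp hαmeas hL2) fun a b g ↦ ?_
    rw [dist_toLp_cocycle hpres hαcoc, dist_toLp_cocycle hpres hαcoc, mul_inv_rev, mul_assoc,
      mul_inv_cancel_left]
  exact ⟨toLp_cocycle_inv_mul hpres hαcoc hL2, hB.comp continuous_inv⟩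

/-- Let a locally compact second-countable Hausdorff group `G` act measurably and
measure-preservingly on a standard Borel probability space `(S, μ)`, and let
`α : G × S → ℝ` be a jointly measurable strict cocycle with `α (g, ·) ∈ L²(μ)` for every `g`.
Then `b : G → L²(S, μ; ℝ)`, `b g = [x ↦ α (g⁻¹, x)]`, satisfies the 1-cocycle identity
`b (g h) = b g + π g (b h)` over the Koopman representation `π g = (· ∘ (g⁻¹ • ·))`,
and `b` is continuous. -/
theorem koopman_cocycle_of_L2_cocycle
    {G : Type*} [Group G] [TopologicalSpace G] [IsTopologicalGroup G]
    [LocallyCompactSpace G] [SecondCountableTopology G] [T2Space G]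
    [MeasurableSpace G] [BorelSpace G]
    {S : Type*} [MeasurableSpace S] [StandardBorelSpace S]
    (μ : Measure S) [IsProbabilityMeasure μ]
    [MulAction G S]
    (hact : Measurable fun p : G × S => p.1 • p.2)
    (hpres : ∀ g : G, MeasurePreserving (fun x : S => g • x) μ μ)
    (α : G → S → ℝ)
    (hαmeas : Measurable fun p : G × S => α p.1 p.2)
    (hαcoc : ∀ g h : G, ∀ x : S, α (g * h) x = α g (h • x) + α h x)
    (hL2 : ∀ g : G, MemLp (α g) 2 μ) :
    (∀ g h : G,
        (hL2 (g * h)⁻¹).toLp (α (g * h)⁻¹) =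
          (hL2 g⁻¹).toLp (α g⁻¹) +
            Lp.compMeasurePreserving (fun x : S => g⁻¹ • x) (hpres g⁻¹)
              ((hL2 h⁻¹).toLp (α h⁻¹))) ∧
      Continuous fun g : G => (hL2 g⁻¹).toLp (α g⁻¹) :=
  koopman_cocycle_of_L2_cocycle_general μ hpres α hαmeas hαcoc hL2
end

section
/- Let G₁, …, Gₙ be topological groups, each Gᵢ generated by a compact symmetric subset Qᵢ with 1 ∈ Qᵢ; set G = G₁ × ⋯ × Gₙ and Q = Q₁ × ⋯ × Qₙ. Let π be a unitary representation of G on a complex Hilbert space H and let b : G → H be a 1-cocycle over π. Assume b = b₀ + b₁ + ⋯ + bₙ + b_r, where: b₀ is a 1-cocycle over π all of whose values are π(G)-invariant vectors; for each i, bᵢ = cᵢ ∘ prᵢ for some continuous map cᵢ : Gᵢ → H with sublinear growth with respect to |·|_{Qᵢ} (prᵢ : G → Gᵢ the projection); b_r is a 1-cocycle over π that is an almost coboundary; and G is a perfect group (G equals its own commutator subgroup). Then b has sublinear growth with respect to |·|_Q. -/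
open MeasureTheory Filter Topology
open scoped Pointwise

/-!
The invariant cocycle `b₀` is a homomorphism into an abelian group, so it vanishes on the perfect
group `G`. Every remaining summand `f` satisfies, for each `δ > 0`, a bound `‖f g‖ ≤ δ m + C_δ`
on `Qᵐ`. For `cᵢ ∘ prᵢ` this combines the sublinear growth of `cᵢ` on long words with a bound on
the compact set `Qᵢᴺ` for short ones, and `prᵢ` maps `Qᵐ` into `Qᵢᵐ`. For `b_r`, pick `v` with
`b_r` within `δ` of the coboundary `∂v` on `Q`: the cocycle `b_r - ∂v` grows by at most `δ` per
letter, while `‖∂v‖ ≤ 2‖v‖`.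
-/

open Set

section WordLength

variable {G : Type*} [Group G] {Q : Set G}

lemma wordLength_le_of_mem_pow {g : G} {m : ℕ} (hg : g ∈ Q ^ m) : wordLength Q g ≤ m :=
  Nat.sInf_le hg

lemma mem_pow_wordLength_of_mem_pow {g : G} {m : ℕ} (hg : g ∈ Q ^ m) :
    g ∈ Q ^ wordLength Q g :=
  Nat.sInf_mem (s := {n | g ∈ Q ^ n}) ⟨m, hg⟩

lemma mem_pow_wordLength_of_pos {g : G} (hg : 0 < wordLength Q g) : g ∈ Q ^ wordLength Q g :=
  Nat.sInf_mem (Nat.nonempty_of_pos_sInf hg)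

end WordLength

lemma Set.apply_mem_pow_of_mem_univ_pi_pow {ι : Type*} {G : ι → Type*} [∀ i, Monoid (G i)]
    {Q : ∀ i, Set (G i)} {m : ℕ} {g : ∀ i, G i} (hg : g ∈ univ.pi Q ^ m) (i : ι) :
    g i ∈ Q i ^ m := by
  have : g i ∈ Pi.evalMonoidHom G i '' (univ.pi Q ^ m) := mem_image_of_mem _ hg
  rw [image_pow] at this
  refine pow_subset_pow_left ?_ this
  rintro _ ⟨x, hx, rfl⟩
  exact hx i (mem_univ i)

lemma IsCompact.pow {M : Type*} [Monoid M] [TopologicalSpace M] [ContinuousMul M] {K : Set M}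
    (hK : IsCompact K) (m : ℕ) : IsCompact (K ^ m) := by
  induction m with
  | zero => simp
  | succ m ih => simpa only [pow_succ] using ih.mul hK

/-- Sublinear growth phrased through the powers `Qᵐ` instead of `wordLength`, which is `0` on
elements outside every `Qᵐ`; in this form it passes along the projections `(∀ i, G i) → G i`
without any assumption that `Q` generates. -/
def HasSublinearGrowthOnPowers {G : Type*} [Monoid G] {E : Type*} [SeminormedAddCommGroup E]
    (Q : Set G) (f : G → E) : Prop :=
  ∀ δ : ℝ, 0 < δ → ∃ C : ℝ, ∀ (m : ℕ) (g : G), g ∈ Q ^ m → ‖f g‖ ≤ δ * m + C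

namespace HasSublinearGrowthOnPowers

variable {G : Type*} [Monoid G] {E : Type*} [SeminormedAddCommGroup E] {Q : Set G}

lemma zero : HasSublinearGrowthOnPowers Q (0 : G → E) :=
  fun δ hδ => ⟨0, fun m _ _ => by simp only [Pi.zero_apply, norm_zero]; positivity⟩

lemma add {f f' : G → E} (hf : HasSublinearGrowthOnPowers Q f)
    (hf' : HasSublinearGrowthOnPowers Q f') : HasSublinearGrowthOnPowers Q (f + f') := by
  intro δ hδ
  obtain ⟨C, hC⟩ := hf (δ / 2) (half_pos hδ)
  obtain ⟨C', hC'⟩ := hf' (δ / 2) (half_pos hδ)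
  refine ⟨C + C', fun m g hg => ?_⟩
  calc ‖f g + f' g‖ ≤ ‖f g‖ + ‖f' g‖ := norm_add_le _ _
    _ ≤ (δ / 2 * m + C) + (δ / 2 * m + C') := add_le_add (hC m g hg) (hC' m g hg)
    _ = δ * m + (C + C') := by ring

lemma sum {ι : Type*} (s : Finset ι) {f : ι → G → E}
    (hf : ∀ i ∈ s, HasSublinearGrowthOnPowers Q (f i)) :
    HasSublinearGrowthOnPowers Q (∑ i ∈ s, f i) :=
  Finset.sum_induction f _ (fun _ _ => add) zero hf

lemma comp_eval {ι : Type*} {G : ι → Type*} [∀ i, Monoid (G i)] {Q : ∀ i, Set (G i)} {i : ι}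
    {f : G i → E} (hf : HasSublinearGrowthOnPowers (Q i) f) :
    HasSublinearGrowthOnPowers (univ.pi Q) fun g => f (g i) := by
  intro δ hδ
  obtain ⟨C, hC⟩ := hf δ hδ
  exact ⟨C, fun m g hg => hC m (g i) (apply_mem_pow_of_mem_univ_pi_pow hg i)⟩

end HasSublinearGrowthOnPowers

section SublinearGrowth

variable {G : Type*} [Group G] {E : Type*} [NormedAddCommGroup E] {Q : Set G} {f : G → E}

lemma HasSublinearGrowthOnPowers.hasSublinearGrowth (hf : HasSublinearGrowthOnPowers Q f) :
    HasSublinearGrowth Q f := by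
  intro ε hε
  obtain ⟨C, hC⟩ := hf (ε / 2) (half_pos hε)
  refine ⟨⌈C / (ε / 2)⌉₊, fun g hg => ?_⟩
  have hCL : C < ε / 2 * wordLength Q g := by
    rw [← div_lt_iff₀' (half_pos hε)]
    exact (Nat.le_ceil _).trans_lt (by exact_mod_cast hg)
  calc ‖f g‖ ≤ ε / 2 * wordLength Q g + C := hC _ g (mem_pow_wordLength_of_pos (by omega))
    _ < ε * wordLength Q g := by linarith

lemma HasSublinearGrowth.hasSublinearGrowthOnPowers [TopologicalSpace G] [ContinuousMul G]
    (hf : HasSublinearGrowth Q f) (hcont : Continuous f) (hQ : IsCompact Q) (hone : 1 ∈ Q) :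
    HasSublinearGrowthOnPowers Q f := by
  intro δ hδ
  obtain ⟨N, hN⟩ := hf δ hδ
  obtain ⟨C, hC⟩ := (hQ.pow N).exists_bound_of_continuousOn hcont.continuousOn
  refine ⟨max C 0, fun m g hg => ?_⟩
  have hδm : δ * wordLength Q g ≤ δ * m := by gcongr; exact wordLength_le_of_mem_pow hg
  rcases lt_or_ge N (wordLength Q g) with hlong | hshort
  · have hsub := hN g hlong
    have hC0 : 0 ≤ max C 0 := le_max_right _ _
    linarith
  · have hgN : g ∈ Q ^ N := pow_subset_pow_right hone hshort (mem_pow_wordLength_of_mem_pow hg)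
    have hbdd : ‖f g‖ ≤ max C 0 := (hC g hgN).trans (le_max_left _ _)
    have hδm0 : 0 ≤ δ * m := by positivity
    linarith

end SublinearGrowth

section Cocycle

variable {G : Type*} [Monoid G] {R : Type*} [Semiring R] {E : Type*} [SeminormedAddCommGroup E]
  [Module R E] {π : G →* (E ≃ₗᵢ[R] E)} {b : G → E}

lemma norm_le_mul_of_mem_pow_of_cocycle (hb : ∀ g h, b (g * h) = b g + π g (b h)) {Q : Set G}
    {δ : ℝ} (hQ : ∀ q ∈ Q, ‖b q‖ ≤ δ) {m : ℕ} {g : G} (hg : g ∈ Q ^ m) : ‖b g‖ ≤ m * δ := by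
  induction m generalizing g with
  | zero =>
    obtain rfl : g = 1 := by simpa using hg
    have h1 := hb 1 1
    simp only [mul_one, map_one, LinearIsometryEquiv.coe_one, id_eq, left_eq_add] at h1
    simp [h1]
  | succ k ih =>
    obtain ⟨a, ha, q, hq, rfl⟩ := Set.mem_mul.mp (by rwa [pow_succ] at hg)
    calc ‖b (a * q)‖ ≤ ‖b a‖ + ‖π a (b q)‖ := by rw [hb]; exact norm_add_le _ _
      _ ≤ k * δ + δ := by rw [LinearIsometryEquiv.norm_map]; exact add_le_add (ih ha) (hQ q hq)
      _ = (k + 1 : ℕ) * δ := by push_cast; ring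

lemma sub_coboundary_cocycle (hb : ∀ g h, b (g * h) = b g + π g (b h)) (v : E) (g h : G) :
    b (g * h) - (π (g * h) v - v) = (b g - (π g v - v)) + π g (b h - (π h v - v)) := by
  rw [hb, map_mul]
  simp only [LinearIsometryEquiv.coe_mul, Function.comp_apply, map_sub]
  abel

end Cocycle

lemma IsAlmostCoboundary.hasSublinearGrowthOnPowers {G : Type*} [Group G] [TopologicalSpace G]
    {H : Type*} [NormedAddCommGroup H] [InnerProductSpace ℂ H] {π : G →* (H ≃ₗᵢ[ℂ] H)}
    {b : G → H} (hb : ∀ g h, b (g * h) = b g + π g (b h)) (halmost : IsAlmostCoboundary π b)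
    {Q : Set G} (hQ : IsCompact Q) : HasSublinearGrowthOnPowers Q b := by
  intro δ hδ
  obtain ⟨v, hv⟩ := halmost Q hQ δ hδ
  refine ⟨2 * ‖v‖, fun m g hg => ?_⟩
  have hdiff : ‖b g - (π g v - v)‖ ≤ m * δ :=
    norm_le_mul_of_mem_pow_of_cocycle (sub_coboundary_cocycle hb v) (fun q hq => (hv q hq).le) hg
  calc ‖b g‖ = ‖(b g - (π g v - v)) + (π g v - v)‖ := by rw [sub_add_cancel]
    _ ≤ ‖b g - (π g v - v)‖ + (‖π g v‖ + ‖v‖) := norm_add_le_of_le le_rfl (norm_sub_le _ _)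
    _ ≤ δ * m + 2 * ‖v‖ := by rw [LinearIsometryEquiv.norm_map]; linarith

lemma MonoidHom.eq_one_of_commutator_eq_top {G A : Type*} [Group G] [CommGroup A]
    (hG : commutator G = ⊤) (f : G →* A) : f = 1 := by
  ext g
  exact f.mem_ker.mp (Abelianization.commutator_subset_ker f (hG ▸ Subgroup.mem_top g))

lemma eq_zero_of_cocycle_of_invariant_of_commutator_eq_top {G : Type*} [Group G]
    {R : Type*} [Semiring R] {E : Type*} [SeminormedAddCommGroup E] [Module R E]
    {π : G →* (E ≃ₗᵢ[R] E)} {b : G → E} (hG : commutator G = ⊤)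
    (hb : ∀ g h, b (g * h) = b g + π g (b h)) (hinv : ∀ g h, π g (b h) = b h) : b = 0 := by
  let f : G →* Multiplicative E :=
    MonoidHom.mk' (fun g => .ofAdd (b g)) fun g h => by rw [hb, hinv]; rfl
  funext g
  exact Multiplicative.ofAdd.injective (DFunLike.congr_fun (f.eq_one_of_commutator_eq_top hG) g)

theorem sublinearGrowth_of_shalom_decomposition_general
    {n : ℕ} {Gi : Fin n → Type*} [∀ i, Group (Gi i)]
    [∀ i, TopologicalSpace (Gi i)] [∀ i, IsTopologicalGroup (Gi i)]
    (Qs : ∀ i, Set (Gi i))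
    (hQcomp : ∀ i, IsCompact (Qs i))
    (hQone : ∀ i, (1 : Gi i) ∈ Qs i)
    {H : Type*} [NormedAddCommGroup H] [InnerProductSpace ℂ H]
    (π : (∀ i, Gi i) →* (H ≃ₗᵢ[ℂ] H))
    (b b₀ br : (∀ i, Gi i) → H) (c : ∀ i, Gi i → H)
    (hb₀coc : ∀ g h : ∀ i, Gi i, b₀ (g * h) = b₀ g + π g (b₀ h))
    (hb₀inv : ∀ g h : ∀ i, Gi i, π g (b₀ h) = b₀ h)
    (hccont : ∀ i, Continuous (c i))
    (hcsub : ∀ i, HasSublinearGrowth (Qs i) (c i))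
    (hbrcoc : ∀ g h : ∀ i, Gi i, br (g * h) = br g + π g (br h))
    (hbralmost : IsAlmostCoboundary π br)
    (hperfect : commutator (∀ i, Gi i) = ⊤)
    (hdecomp : ∀ g : ∀ i, Gi i, b g = b₀ g + (∑ i, c i (g i)) + br g) :
    HasSublinearGrowth (Set.univ.pi Qs) b := by
  have hb₀ : b₀ = 0 := eq_zero_of_cocycle_of_invariant_of_commutator_eq_top hperfect hb₀coc hb₀inv
  have hb : b = (∑ i, fun g : ∀ i, Gi i => c i (g i)) + br := by
    funext g
    simp [hdecomp, hb₀]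
  rw [hb]
  refine (HasSublinearGrowthOnPowers.add (.sum _ fun i _ => ?_) ?_).hasSublinearGrowth
  · exact ((hcsub i).hasSublinearGrowthOnPowers (hccont i) (hQcomp i) (hQone i)).comp_eval
  · exact hbralmost.hasSublinearGrowthOnPowers hbrcoc (isCompact_univ_pi hQcomp)

/-- Let `G = G₁ × ⋯ × Gₙ` with compact symmetric generating sets `Qᵢ ∋ 1`, and suppose a
1-cocycle `b` over a unitary representation `π` of `G` decomposes as
`b = b₀ + b₁ + ⋯ + bₙ + b_r`, where `b₀` is a 1-cocycle with `π(G)`-invariant values,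
`bᵢ = cᵢ ∘ prᵢ` with `cᵢ` continuous of sublinear growth with respect to `|·|_{Qᵢ}`, and
`b_r` is an almost-coboundary 1-cocycle. If `G` is perfect, then `b` has sublinear growth
with respect to `Q = Q₁ × ⋯ × Qₙ`. -/
theorem sublinearGrowth_of_shalom_decomposition
    {n : ℕ} {Gi : Fin n → Type*} [∀ i, Group (Gi i)]
    [∀ i, TopologicalSpace (Gi i)] [∀ i, IsTopologicalGroup (Gi i)]
    (Qs : ∀ i, Set (Gi i))
    (hQcomp : ∀ i, IsCompact (Qs i)) (hQsymm : ∀ i, (Qs i)⁻¹ = Qs i)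
    (hQone : ∀ i, (1 : Gi i) ∈ Qs i) (hQgen : ∀ i, Subgroup.closure (Qs i) = ⊤)
    {H : Type*} [NormedAddCommGroup H] [InnerProductSpace ℂ H] [CompleteSpace H]
    (π : (∀ i, Gi i) →* (H ≃ₗᵢ[ℂ] H))
    (hπ : ∀ v : H, Continuous fun g : ∀ i, Gi i => π g v)
    (b b₀ br : (∀ i, Gi i) → H) (c : ∀ i, Gi i → H)
    (hbcont : Continuous b)
    (hbcoc : ∀ g h : ∀ i, Gi i, b (g * h) = b g + π g (b h))
    (hb₀cont : Continuous b₀)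
    (hb₀coc : ∀ g h : ∀ i, Gi i, b₀ (g * h) = b₀ g + π g (b₀ h))
    (hb₀inv : ∀ g h : ∀ i, Gi i, π g (b₀ h) = b₀ h)
    (hccont : ∀ i, Continuous (c i))
    (hcsub : ∀ i, HasSublinearGrowth (Qs i) (c i))
    (hbrcont : Continuous br)
    (hbrcoc : ∀ g h : ∀ i, Gi i, br (g * h) = br g + π g (br h))
    (hbralmost : IsAlmostCoboundary π br)
    (hperfect : commutator (∀ i, Gi i) = ⊤)
    (hdecomp : ∀ g : ∀ i, Gi i, b g = b₀ g + (∑ i, c i (g i)) + br g) :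
    HasSublinearGrowth (Set.univ.pi Qs) b :=
  sublinearGrowth_of_shalom_decomposition_general Qs hQcomp hQone π b b₀ br c hb₀coc hb₀inv hccont
    hcsub hbrcoc hbralmost hperfect hdecomp
end

section
/- Let (S, μ) be a probability space, let T : S → S be a measure-preserving map, and let f ∈ L²(S, μ; ℝ). For m ≥ 1 write Sₘf(x) = Σ_{j=0}^{m−1} f(Tʲx) for the Birkhoff sums. If (1/m)·‖Sₘf‖_{L²(μ)} → 0 as m → ∞, then for μ-almost every x ∈ S one has Sₘf(x)/m → 0 as m → ∞. -/
open MeasureTheory Filter Topology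

/-!
Every `h ∈ L²` orthogonal to the coboundaries `G ∘ T - G` satisfies `⟪h, f ∘ Tʲ⟫ = ⟪h, f⟫`, so
`m |⟪h, f⟫| = |⟪h, Sₘ f⟫| ≤ ‖h‖ ‖Sₘ f‖ = o(m)`; hence `f` lies in the `L²`-closure of the
coboundaries. Write `f = r + (g ∘ T - g)` with `‖r‖₁` small. The coboundary part telescopes,
`Sₘ (g ∘ T - g) = g ∘ Tᵐ - g`, and `g ∘ Tᵐ / m → 0` a.e. by Borel–Cantelli, the `g ∘ Tᵐ` being
identically distributed. The remainder is controlled uniformly in `m` by the maximal ergodic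
inequality `μ {∃ m, c m < Sₘ |r|} ≤ ‖r‖₁ / c`.
-/

theorem mem_topologicalClosure_range_sub_one_of_tendsto_norm_birkhoffSum_div {𝕜 E : Type*}
    [RCLike 𝕜] [NormedAddCommGroup E] [InnerProductSpace 𝕜 E] [CompleteSpace E]
    (U : E →ₗ[𝕜] E) {v : E}
    (hv : Tendsto (fun m : ℕ => ‖birkhoffSum U id m v‖ / m) atTop (𝓝 0)) :
    v ∈ (LinearMap.range (U - 1)).topologicalClosure := by
  rw [← Submodule.orthogonal_orthogonal_eq_closure, Submodule.mem_orthogonal]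
  intro w hw
  have hinvariant : ∀ j, inner 𝕜 w (U^[j] v) = inner 𝕜 w v := by
    intro j
    induction j with
    | zero => rfl
    | succ j ih =>
      have h := Submodule.inner_right_of_mem_orthogonal
        (LinearMap.mem_range_self _ (U^[j] v)) hw
      rw [inner_eq_zero_symm, LinearMap.sub_apply, inner_sub_right, sub_eq_zero] at h
      rw [Function.iterate_succ_apply', ← ih]
      exact h
  have hsum : ∀ m : ℕ, ‖inner 𝕜 w (birkhoffSum U id m v)‖ = m * ‖inner 𝕜 w v‖ := by
    intro m
    simp [birkhoffSum, inner_sum, hinvariant, norm_mul]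
  have hbound : ∀ m : ℕ, 0 < m →
      ‖inner 𝕜 w v‖ ≤ ‖w‖ * (‖birkhoffSum U id m v‖ / m) := by
    intro m hm
    rw [mul_div_assoc', le_div_iff₀ (by exact_mod_cast hm), mul_comm, ← hsum]
    exact norm_inner_le_norm _ _
  have hzero : ‖inner 𝕜 w v‖ ≤ 0 := by
    refine ge_of_tendsto (by simpa using hv.const_mul ‖w‖) ?_
    filter_upwards [eventually_gt_atTop 0] with m hm using hbound m hm
  exact norm_le_zero_iff.1 hzero

section

variable {S : Type*} {T : S → S} {ψ : S → ℝ}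

theorem birkhoffSum_comp_sub {G : Type*} [AddCommGroup G] (T : S → S) (g : S → G) (n : ℕ)
    (x : S) : birkhoffSum T (fun y => g (T y) - g y) n x = g (T^[n] x) - g x := by
  simpa [birkhoffSum, ← Function.iterate_succ_apply' T] using
    Finset.sum_range_sub (fun k => g (T^[k] x)) n

/-- `birkhoffMax T ψ N = max_{0 ≤ n ≤ N} birkhoffSum T ψ n`. -/
noncomputable def birkhoffMax (T : S → S) (ψ : S → ℝ) : ℕ → S → ℝ
  | 0 => 0
  | N + 1 => fun x => max 0 (ψ x + birkhoffMax T ψ N (T x))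

theorem birkhoffMax_nonneg (N : ℕ) (x : S) : 0 ≤ birkhoffMax T ψ N x := by
  cases N with
  | zero => exact le_rfl
  | succ N => exact le_max_left _ _

theorem birkhoffMax_le_succ (N : ℕ) (x : S) :
    birkhoffMax T ψ N x ≤ birkhoffMax T ψ (N + 1) x := by
  induction N generalizing x with
  | zero => exact birkhoffMax_nonneg 1 x
  | succ N ih => exact max_le_max le_rfl (add_le_add le_rfl (ih (T x)))

theorem monotone_birkhoffMax (x : S) : Monotone fun N => birkhoffMax T ψ N x :=
  monotone_nat_of_le_succ fun N => birkhoffMax_le_succ N x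

theorem birkhoffSum_le_birkhoffMax {n N : ℕ} (hnN : n ≤ N) (x : S) :
    birkhoffSum T ψ n x ≤ birkhoffMax T ψ N x := by
  induction n generalizing N x with
  | zero => exact birkhoffMax_nonneg N x
  | succ n ih =>
    cases N with
    | zero => omega
    | succ N =>
      rw [birkhoffSum_succ']
      exact (add_le_add le_rfl (ih (by omega) (T x))).trans (le_max_right _ _)

theorem birkhoffMax_sub_birkhoffMax_comp_le {N : ℕ} {x : S} (hx : 0 < birkhoffMax T ψ N x) :
    birkhoffMax T ψ N x - birkhoffMax T ψ N (T x) ≤ ψ x := by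
  cases N with
  | zero => exact absurd hx (lt_irrefl 0)
  | succ N =>
    have hpos : 0 < ψ x + birkhoffMax T ψ N (T x) :=
      (lt_max_iff.1 hx).resolve_left (lt_irrefl 0)
    have hrec : birkhoffMax T ψ (N + 1) x = ψ x + birkhoffMax T ψ N (T x) :=
      max_eq_right hpos.le
    linarith [birkhoffMax_le_succ (T := T) (ψ := ψ) N (T x)]

theorem eventually_abs_birkhoffSum_div_le {f r g : S → ℝ} {x : S} {c : ℝ} (hc : 0 < c)
    (hdecomp : ∀ m, birkhoffSum T f m x = birkhoffSum T r m x + (g (T^[m] x) - g x))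
    (hr : ∀ n : ℕ, birkhoffSum T (fun y => |r y|) n x ≤ c * n)
    (hg : Tendsto (fun m : ℕ => g (T^[m] x) / m) atTop (𝓝 0)) :
    ∀ᶠ m : ℕ in atTop, |birkhoffSum T f m x / m| ≤ 2 * c := by
  have hcob : Tendsto (fun m : ℕ => (g (T^[m] x) - g x) / m) atTop (𝓝 0) := by
    simpa [sub_div] using hg.sub (tendsto_const_div_atTop_nhds_zero_nat (g x))
  filter_upwards [Metric.tendsto_nhds.1 hcob c hc, eventually_gt_atTop 0] with m hcob_m hm
  rw [Real.dist_eq, sub_zero] at hcob_m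
  have hr_m : |birkhoffSum T r m x / m| ≤ c := by
    rw [abs_div, Nat.abs_cast, div_le_iff₀ (by exact_mod_cast hm)]
    exact (Finset.abs_sum_le_sum_abs _ _).trans (hr m)
  rw [hdecomp, add_div]
  linarith [abs_add_le (birkhoffSum T r m x / m) ((g (T^[m] x) - g x) / m)]

variable [MeasurableSpace S] {μ : Measure S}

theorem measurable_birkhoffMax (hT : Measurable T) (hψ : Measurable ψ) (N : ℕ) :
    Measurable (birkhoffMax T ψ N) := by
  induction N with
  | zero => exact measurable_const
  | succ N ih => exact measurable_const.max (hψ.add (ih.comp hT))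

theorem integrable_birkhoffMax (hT : MeasurePreserving T μ μ) (hψm : Measurable ψ)
    (hψ : Integrable ψ μ) (N : ℕ) : Integrable (birkhoffMax T ψ N) μ := by
  induction N with
  | zero => exact integrable_zero _ _ _
  | succ N ih =>
    have h := (hψ.add ((hT.integrable_comp
      (measurable_birkhoffMax hT.measurable hψm N).aestronglyMeasurable).2 ih)).pos_part
    simp only [max_comm] at h
    exact h

/-- Hopf's maximal ergodic lemma, by Garsia's argument: `M - M ∘ T ≤ ψ` on `{M > 0}`, while
`∫_{M > 0} M = ∫ M = ∫ M ∘ T ≥ ∫_{M > 0} M ∘ T`. -/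
theorem setIntegral_birkhoffMax_pos_nonneg (hT : MeasurePreserving T μ μ) (hψm : Measurable ψ)
    (hψ : Integrable ψ μ) (N : ℕ) :
    0 ≤ ∫ x in {x | 0 < birkhoffMax T ψ N x}, ψ x ∂μ := by
  set M := birkhoffMax T ψ N
  set E := {x | 0 < M x}
  have hMm : Measurable M := measurable_birkhoffMax hT.measurable hψm N
  have hM : Integrable M μ := integrable_birkhoffMax hT hψm hψ N
  have hMT : Integrable (fun x => M (T x)) μ :=
    (hT.integrable_comp hMm.aestronglyMeasurable).2 hM
  have hE : MeasurableSet E := measurableSet_lt measurable_const hMm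
  have hM_E : ∫ x in E, M x ∂μ = ∫ x, M x ∂μ :=
    setIntegral_eq_integral_of_forall_compl_eq_zero fun x hx =>
      le_antisymm (not_lt.1 hx) (birkhoffMax_nonneg N x)
  have hMT_E : ∫ x in E, M (T x) ∂μ ≤ ∫ x, M (T x) ∂μ :=
    setIntegral_le_integral hMT (.of_forall fun x => birkhoffMax_nonneg N (T x))
  have hMT_eq : ∫ x, M (T x) ∂μ = ∫ x, M x ∂μ := by
    rw [← integral_map hT.aemeasurable (hT.map_eq ▸ hMm.aestronglyMeasurable), hT.map_eq]
  have hgarsia : ∫ x in E, (M x - M (T x)) ∂μ ≤ ∫ x in E, ψ x ∂μ :=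
    setIntegral_mono_on (hM.sub hMT).integrableOn hψ.integrableOn hE
      fun x hx => birkhoffMax_sub_birkhoffMax_comp_le hx
  rw [integral_sub hM.integrableOn hMT.integrableOn] at hgarsia
  linarith

theorem measure_exists_birkhoffSum_gt_le [IsFiniteMeasure μ] (hT : MeasurePreserving T μ μ)
    {φ : S → ℝ} (hφm : Measurable φ) (hφ : Integrable φ μ) (hφ0 : 0 ≤ φ) {c : ℝ}
    (hc : 0 < c) :
    μ {x | ∃ n : ℕ, c * n < birkhoffSum T φ n x} ≤ ENNReal.ofReal ((∫ x, φ x ∂μ) / c) := by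
  set ψ : S → ℝ := fun x => φ x - c
  have hψm : Measurable ψ := hφm.sub measurable_const
  have hψ : Integrable ψ μ := hφ.sub (integrable_const c)
  have hbirkhoffSum_ψ : ∀ n x, birkhoffSum T ψ n x = birkhoffSum T φ n x - c * n := by
    intro n x
    simp [ψ, birkhoffSum, Finset.sum_sub_distrib, mul_comm]
  set E : ℕ → Set S := fun N => {x | 0 < birkhoffMax T ψ N x}
  have hsub : {x | ∃ n : ℕ, c * n < birkhoffSum T φ n x} ⊆ ⋃ N, E N := by
    rintro x ⟨n, hn⟩
    refine Set.mem_iUnion.2 ⟨n, ?_⟩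
    show 0 < birkhoffMax T ψ n x
    linarith [hbirkhoffSum_ψ n x, birkhoffSum_le_birkhoffMax (T := T) (ψ := ψ) (le_refl n) x]
  have hE : ∀ N, μ (E N) ≤ ENNReal.ofReal ((∫ x, φ x ∂μ) / c) := by
    intro N
    have hhopf := setIntegral_birkhoffMax_pos_nonneg hT hψm hψ N
    rw [integral_sub hφ.integrableOn (integrable_const c).integrableOn, setIntegral_const,
      smul_eq_mul] at hhopf
    have hφE : ∫ x in E N, φ x ∂μ ≤ ∫ x, φ x ∂μ :=
      setIntegral_le_integral hφ (.of_forall hφ0)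
    rw [← ofReal_measureReal]
    exact ENNReal.ofReal_le_ofReal ((le_div_iff₀ hc).2 (by linarith))
  calc μ {x | ∃ n : ℕ, c * n < birkhoffSum T φ n x} ≤ μ (⋃ N, E N) := measure_mono hsub
    _ = ⨆ N, μ (E N) := Monotone.measure_iUnion fun _ _ hNN' _ hx =>
      hx.trans_le (monotone_birkhoffMax _ hNN')
    _ ≤ _ := iSup_le hE

theorem ae_tendsto_zero_of_forall_pos {ι : Type*} {l : Filter ι} {u : ι → S → ℝ}
    (h : ∀ ε > 0, ∀ᵐ x ∂μ, ∀ᶠ i in l, |u i x| ≤ ε) :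
    ∀ᵐ x ∂μ, Tendsto (fun i => u i x) l (𝓝 0) := by
  have hall := ae_all_iff.2 fun j : ℕ => h (1 / (j + 1)) (by positivity)
  filter_upwards [hall] with x hx
  rw [Metric.tendsto_nhds]
  intro ε hε
  obtain ⟨j, hj⟩ := exists_nat_one_div_lt hε
  filter_upwards [hx j] with i hi
  rw [Real.dist_eq, sub_zero]
  exact hi.trans_lt hj

theorem ae_tendsto_comp_iterate_div_atTop [IsProbabilityMeasure μ]
    (hT : MeasurePreserving T μ μ) {g : S → ℝ} (hg : Integrable g μ) :
    ∀ᵐ x ∂μ, Tendsto (fun m : ℕ => g (T^[m] x) / m) atTop (𝓝 0) := by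
  refine ae_tendsto_zero_of_forall_pos fun ε hε => ?_
  set X : S → ℝ := fun y => |g y| / ε
  have hX : Integrable X μ := hg.abs.div_const ε
  have hsum : ∑' j : ℕ, μ (T^[j] ⁻¹' {y | X y ∈ Set.Ioi (j : ℝ)}) ≠ ⊤ := by
    have hpreimage : ∀ j : ℕ, μ (T^[j] ⁻¹' {y | X y ∈ Set.Ioi (j : ℝ)}) =
        μ {y | X y ∈ Set.Ioi (j : ℝ)} := fun j =>
      (hT.iterate j).measure_preimage
        (hX.aemeasurable.nullMeasurableSet_preimage measurableSet_Ioi)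
    rw [tsum_congr hpreimage]
    -- the strong law's tail estimate is stated for `volume`
    let _ : MeasureSpace S := ⟨μ⟩
    exact (ProbabilityTheory.tsum_prob_mem_Ioi_lt_top hX fun y => by positivity).ne
  filter_upwards [ae_eventually_notMem hsum] with x hx
  filter_upwards [hx, eventually_gt_atTop 0] with m hm hm0
  have hgm : |g (T^[m] x)| ≤ ε * m := (div_le_iff₀' hε).1 (not_lt.1 hm)
  rw [abs_div, Nat.abs_cast, div_le_iff₀ (by exact_mod_cast hm0)]
  exact hgm

theorem measure_not_eventually_abs_birkhoffSum_div_le [IsProbabilityMeasure μ]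
    (hT : MeasurePreserving T μ μ) {f r g : S → ℝ} (hrm : Measurable r) (hr : Integrable r μ)
    (hg : Integrable g μ) (hfrg : f =ᵐ[μ] r + (g ∘ T - g)) {c : ℝ} (hc : 0 < c) :
    μ {x | ¬ ∀ᶠ m : ℕ in atTop, |birkhoffSum T f m x / m| ≤ 2 * c} ≤
      ENNReal.ofReal ((∫ x, |r x| ∂μ) / c) := by
  have hdecomp : ∀ᵐ x ∂μ, ∀ m,
      birkhoffSum T f m x = birkhoffSum T r m x + (g (T^[m] x) - g x) := by
    refine ae_all_iff.2 fun m => ?_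
    filter_upwards [hT.quasiMeasurePreserving.birkhoffSum_ae_eq_of_ae_eq hfrg m] with x hx
    rw [hx, birkhoffSum_add']
    exact congrArg _ (birkhoffSum_comp_sub T g m x)
  refine (measure_mono_ae ?_).trans
    (measure_exists_birkhoffSum_gt_le hT hrm.abs hr.abs (fun _ => abs_nonneg _) hc)
  filter_upwards [hdecomp, ae_tendsto_comp_iterate_div_atTop hT hg] with x hx hgx hbad
  by_contra hmax
  exact hbad (eventually_abs_birkhoffSum_div_le hc hx
    (fun n => not_lt.1 fun h => hmax ⟨n, h⟩) hgx)

theorem ae_tendsto_birkhoffSum_div_of_forall_approx [IsProbabilityMeasure μ]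
    (hT : MeasurePreserving T μ μ) {f : S → ℝ}
    (happrox : ∀ η > 0, ∃ r g : S → ℝ, Measurable r ∧ Integrable r μ ∧ Integrable g μ ∧
      f =ᵐ[μ] r + (g ∘ T - g) ∧ ∫ x, |r x| ∂μ ≤ η) :
    ∀ᵐ x ∂μ, Tendsto (fun m : ℕ => birkhoffSum T f m x / m) atTop (𝓝 0) := by
  refine ae_tendsto_zero_of_forall_pos fun ε hε => ae_iff.2 ?_
  refine nonpos_iff_eq_zero.1 (ENNReal.le_of_forall_pos_le_add fun δ hδ _ => ?_)
  obtain ⟨r, g, hrm, hr, hg, hfrg, hsmall⟩ := happrox (ε / 2 * δ) (by positivity)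
  have hbad := measure_not_eventually_abs_birkhoffSum_div_le hT hrm hr hg hfrg (half_pos hε)
  rw [mul_div_cancel₀ _ two_ne_zero] at hbad
  refine hbad.trans ?_
  rw [zero_add, ← ENNReal.ofReal_coe_nnreal]
  exact ENNReal.ofReal_le_ofReal ((div_le_iff₀' (half_pos hε)).2 hsmall)

theorem MeasureTheory.MemLp.birkhoffSum {E : Type*} [NormedAddCommGroup E] {p : ENNReal}
    {f : S → E} (hf : MemLp f p μ) (hT : MeasurePreserving T μ μ) (n : ℕ) :
    MemLp (_root_.birkhoffSum T f n) p μ := by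
  convert memLp_finsetSum' (Finset.range n) fun j _ => hf.comp_measurePreserving (hT.iterate j)
  ext x
  simp [_root_.birkhoffSum]

theorem birkhoffSum_compMeasurePreservingₗ_toLp {E : Type*} [NormedAddCommGroup E]
    [NormedSpace ℝ E] {p : ENNReal} [Fact (1 ≤ p)]
    {f : S → E} (hf : MemLp f p μ) (hT : MeasurePreserving T μ μ) (n : ℕ) :
    birkhoffSum (Lp.compMeasurePreservingₗ ℝ T hT) id n (hf.toLp f) =
      (hf.birkhoffSum hT n).toLp _ := by
  induction n with
  | zero => simp [birkhoffSum]
  | succ n ih =>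
    have hiterate : (Lp.compMeasurePreservingₗ ℝ T hT)^[n] (hf.toLp f) =
        (hf.comp_measurePreserving (hT.iterate n)).toLp _ := by
      change (Lp.compMeasurePreserving T hT)^[n] _ = _
      rw [Lp.compMeasurePreserving_iterate, Lp.toLp_compMeasurePreserving]
    rw [birkhoffSum_succ, ih, id, hiterate, ← MemLp.toLp_add]
    exact MemLp.toLp_congr _ _ (.of_eq (funext (birkhoffSum_succ T f n)).symm)

theorem MeasureTheory.Lp.norm_toLp_two_eq_sqrt_integral_sq {f : S → ℝ} (hf : MemLp f 2 μ) :
    ‖hf.toLp f‖ = √(∫ x, f x ^ 2 ∂μ) := by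
  rw [Lp.norm_toLp, toReal_eLpNorm hf.aestronglyMeasurable,
    lpNorm_eq_integral_norm_rpow_toReal two_ne_zero ENNReal.ofNat_ne_top hf.aestronglyMeasurable,
    Real.sqrt_eq_rpow]
  simp

theorem exists_coboundary_approx_of_mem_closure [IsProbabilityMeasure μ]
    (hT : MeasurePreserving T μ μ) {f : S → ℝ} (hf : MemLp f 2 μ)
    (hclosure : hf.toLp f ∈
      (LinearMap.range (Lp.compMeasurePreservingₗ ℝ T hT - 1)).topologicalClosure) :
    ∀ η > 0, ∃ r g : S → ℝ, Measurable r ∧ Integrable r μ ∧ Integrable g μ ∧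
      f =ᵐ[μ] r + (g ∘ T - g) ∧ ∫ x, |r x| ∂μ ≤ η := by
  intro η hη
  rw [← SetLike.mem_coe, Submodule.topologicalClosure_coe] at hclosure
  obtain ⟨_, ⟨G, rfl⟩, hdist⟩ := Metric.mem_closure_iff.1 hclosure η hη
  set R : Lp ℝ 2 μ := hf.toLp f - (Lp.compMeasurePreserving T hT G - G)
  refine ⟨R, G, (Lp.stronglyMeasurable R).measurable, (Lp.memLp R).integrable one_le_two,
    (Lp.memLp G).integrable one_le_two, ?_, ?_⟩
  · filter_upwards [hf.coeFn_toLp,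
      Lp.coeFn_sub (hf.toLp f) (Lp.compMeasurePreserving T hT G - G),
      Lp.coeFn_sub (Lp.compMeasurePreserving T hT G) G, Lp.coeFn_compMeasurePreserving G hT]
      with x hf_x hR_x hcob_x hGT_x
    simp only [R, Pi.add_apply, Pi.sub_apply, Function.comp_apply, hR_x, hf_x, hcob_x, hGT_x]
    ring
  · calc ∫ x, |R x| ∂μ = (eLpNorm R 1 μ).toReal := by
          rw [toReal_eLpNorm (Lp.aestronglyMeasurable R), lpNorm_one_eq_integral_norm
            (Lp.aestronglyMeasurable R)]
          rfl
      _ ≤ (eLpNorm R 2 μ).toReal := ENNReal.toReal_mono (Lp.eLpNorm_ne_top R)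
          (eLpNorm_le_eLpNorm_of_exponent_le one_le_two (Lp.aestronglyMeasurable R))
      _ ≤ η := by
          rw [← Lp.norm_def, ← dist_eq_norm]
          exact hdist.le

end

/-- If the `L²`-norms of the Birkhoff sums `Sₘ f` of an `L²` function `f` over a
measure-preserving map `T` of a probability space are `o(m)`, then almost everywhere
`Sₘ f (x) / m → 0`. -/
theorem birkhoff_ae_of_L2_sublinear
    {S : Type*} [MeasurableSpace S] (μ : Measure S) [IsProbabilityMeasure μ]
    (T : S → S) (hT : MeasurePreserving T μ μ)
    (f : S → ℝ) (hf : MemLp f 2 μ)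
    (hL2 : Tendsto
      (fun m : ℕ =>
        (1 / (m : ℝ)) * Real.sqrt (∫ x, (∑ j ∈ Finset.range m, f (T^[j] x)) ^ 2 ∂μ))
      atTop (𝓝 0)) :
    ∀ᵐ x ∂μ, Tendsto (fun m : ℕ => (∑ j ∈ Finset.range m, f (T^[j] x)) / (m : ℝ))
      atTop (𝓝 0) := by
  set U := Lp.compMeasurePreservingₗ (E := ℝ) (p := 2) ℝ T hT
  have hnorm : ∀ m : ℕ, ‖birkhoffSum U id m (hf.toLp f)‖ =
      √(∫ x, (∑ j ∈ Finset.range m, f (T^[j] x)) ^ 2 ∂μ) := fun m => by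
    rw [birkhoffSum_compMeasurePreservingₗ_toLp, Lp.norm_toLp_two_eq_sqrt_integral_sq]
    rfl
  have hclosure := mem_topologicalClosure_range_sub_one_of_tendsto_norm_birkhoffSum_div U
    (v := hf.toLp f)
    (by simpa only [hnorm, one_div, inv_mul_eq_div] using hL2)
  exact ae_tendsto_birkhoffSum_div_of_forall_approx hT
    (exists_coboundary_approx_of_mem_closure hT hf hclosure)
end
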